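/- Let σ₃ = ⟨(0,1,0),(0,0,1),(6,8,9)⟩ ⊆ ℝ³ (a maximal cone of the dual Newton polyhedron of the hypersurface y³ + xz² − x⁴ = 0). Then the Hilbert basis of σ₃ is exactly { (0,1,0), (0,0,1), (6,8,9), (1,2,2), (2,3,3), (3,4,5) }; that is, these six vectors are precisely the irreducible elements of S_{σ₃} = σ₃ ∩ ℤ³, and they generate the monoid S_{σ₃}. -/

import Mathlib

/-!
The cone `σ₃` is cut out by `x ≥ 0`, `4x ≤ 3y`, `3x ≤ 2z`. Every nonzero lattice point `u` of `σ₃`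
stays in `σ₃` after subtracting one of the six vectors: `(6,8,9)` if `x ≥ 6`, a unit vector if
`x = 0`, `(1,2,2)`, `(2,3,3)`, `(3,4,5)` if `x = 1, 2, 3`, and `(2,3,3)` if `x = 4, 5`. Descent
on `x + y + z` shows that the six vectors generate `S_{σ₃}`. An irreducible element of a monoid
lies in every generating set avoiding `0`, and the inequalities leave none of the six vectors a
nontrivial splitting.
-/

open scoped BigOperators

/-- The real-coordinate vector attached to an integer vector. -/
def toR {n : ℕ} (u : Fin n → ℤ) : Fin n → ℝ := fun j => (u j : ℝ)

/-- The rational polyhedral cone generated by integer vectors `v 0, …, v (r-1)`: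
all nonnegative real linear combinations of the generators. -/
def coneOf {n r : ℕ} (v : Fin r → (Fin n → ℤ)) : Set (Fin n → ℝ) :=
  { x | ∃ c : Fin r → ℝ, (∀ i, 0 ≤ c i) ∧ x = ∑ i, c i • toR (v i) }

/-- The lattice points of a subset of `ℝⁿ`: `S_σ = σ ∩ ℤⁿ`. -/
def latticePoints {n : ℕ} (σ : Set (Fin n → ℝ)) : Set (Fin n → ℤ) :=
  { u | toR u ∈ σ }

/-- `u` is an irreducible element of `S`: it is a nonzero element of `S` which cannot be
written as the sum of two nonzero elements of `S`. -/
def IsIrreducibleElt {n : ℕ} (S : Set (Fin n → ℤ)) (u : Fin n → ℤ) : Prop :=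
  u ∈ S ∧ u ≠ 0 ∧ ∀ a b : Fin n → ℤ, a ∈ S → b ∈ S → u = a + b → a = 0 ∨ b = 0

/-- The Hilbert basis of (the monoid of lattice points of) a cone:
the set of its irreducible elements. -/
def hilbertBasis {n : ℕ} (S : Set (Fin n → ℤ)) : Set (Fin n → ℤ) :=
  { u | IsIrreducibleElt S u }

@[simp]
theorem toR_add {n : ℕ} (a b : Fin n → ℤ) : toR (a + b) = toR a + toR b := by
  funext j
  simp [toR]

@[simp]
theorem toR_zero {n : ℕ} : toR (0 : Fin n → ℤ) = 0 := by
  funext j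
  simp [toR]

theorem zero_mem_coneOf {n r : ℕ} (v : Fin r → (Fin n → ℤ)) : 0 ∈ coneOf v :=
  ⟨0, fun _ => le_rfl, by simp⟩

theorem add_mem_coneOf {n r : ℕ} {v : Fin r → (Fin n → ℤ)} {x y : Fin n → ℝ}
    (hx : x ∈ coneOf v) (hy : y ∈ coneOf v) : x + y ∈ coneOf v := by
  obtain ⟨c, hc, rfl⟩ := hx
  obtain ⟨d, hd, rfl⟩ := hy
  exact ⟨c + d, fun i => add_nonneg (hc i) (hd i), by simp [add_smul, Finset.sum_add_distrib]⟩

def coneSubmonoid {n r : ℕ} (v : Fin r → (Fin n → ℤ)) : AddSubmonoid (Fin n → ℤ) where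
  carrier := latticePoints (coneOf v)
  zero_mem' := by simpa only [latticePoints, Set.mem_ofPred_eq, toR_zero] using zero_mem_coneOf v
  add_mem' {a b} ha hb := by
    simpa only [latticePoints, Set.mem_ofPred_eq, toR_add] using add_mem_coneOf ha hb

theorem mem_of_isIrreducibleElt_of_closure_eq {n : ℕ} {S B : Set (Fin n → ℤ)}
    (hB : (AddSubmonoid.closure B : Set (Fin n → ℤ)) = S) (h0 : (0 : Fin n → ℤ) ∉ B)
    {u : Fin n → ℤ} (hu : IsIrreducibleElt S u) : u ∈ B := by
  have huB : u ∈ AddSubmonoid.closure B := by rw [← SetLike.mem_coe, hB]; exact hu.1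
  induction huB using AddSubmonoid.closure_induction_left with
  | zero => exact absurd rfl hu.2.1
  | add_left g hg v hv _ =>
    have hgS : g ∈ S := hB ▸ AddSubmonoid.subset_closure hg
    rcases hu.2.2 g v hgS (hB ▸ hv) rfl with rfl | rfl
    · exact absurd hg h0
    · simpa using hg

theorem AddSubmonoid.mem_closure_of_descent {A : Type*} [AddCommGroup A] {S B : Set A}
    (f : A → ℕ) (hdesc : ∀ u ∈ S, u ≠ 0 → ∃ g ∈ B, u - g ∈ S ∧ f (u - g) < f u)
    {u : A} (hu : u ∈ S) : u ∈ AddSubmonoid.closure B := by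
  induction h : f u using Nat.strong_induction_on generalizing u with
  | _ n ih =>
    by_cases hu0 : u = 0
    · exact hu0 ▸ zero_mem _
    obtain ⟨g, hg, hgS, hlt⟩ := hdesc u hu hu0
    simpa using add_mem (subset_closure hg) (ih _ (h ▸ hlt) hgS rfl)

def sigma3Gens : Fin 3 → Fin 3 → ℤ := ![![0, 1, 0], ![0, 0, 1], ![6, 8, 9]]

def sigma3Basis : Set (Fin 3 → ℤ) :=
  {![0, 1, 0], ![0, 0, 1], ![6, 8, 9], ![1, 2, 2], ![2, 3, 3], ![3, 4, 5]}

theorem zero_notMem_sigma3Basis : (0 : Fin 3 → ℤ) ∉ sigma3Basis := by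
  simp [sigma3Basis, funext_iff, Fin.forall_fin_succ]

-- Solving `u = c₀ (0,1,0) + c₁ (0,0,1) + c₂ (6,8,9)` gives `c = (y - 4x/3, z - 3x/2, x/6)`.
theorem mem_latticePoints_sigma3_iff (u : Fin 3 → ℤ) :
    u ∈ latticePoints (coneOf sigma3Gens) ↔
      0 ≤ u 0 ∧ 4 * u 0 ≤ 3 * u 1 ∧ 3 * u 0 ≤ 2 * u 2 := by
  have coords (c : Fin 3 → ℝ) : toR u = ∑ i, c i • toR (sigma3Gens i) ↔
      (u 0 : ℝ) = c 2 * 6 ∧ (u 1 : ℝ) = c 0 + c 2 * 8 ∧ (u 2 : ℝ) = c 1 + c 2 * 9 := by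
    simp [funext_iff, Fin.forall_fin_succ, Fin.sum_univ_three, sigma3Gens, toR]
  simp only [latticePoints, coneOf, Set.mem_ofPred_eq, coords]
  constructor
  · rintro ⟨c, hc, h0, h1, h2⟩
    have := hc 0; have := hc 1; have := hc 2
    refine ⟨?_, ?_, ?_⟩ <;> (rify; linarith)
  · rintro ⟨h0, h1, h2⟩
    rify at h0 h1 h2
    refine ⟨![u 1 - 4 / 3 * u 0, u 2 - 3 / 2 * u 0, u 0 / 6], ?_, ?_⟩
    · intro i
      fin_cases i <;> simp <;> linarith
    · refine ⟨?_, ?_, ?_⟩ <;> simp <;> ring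

theorem sigma3Basis_subset : sigma3Basis ⊆ latticePoints (coneOf sigma3Gens) := by
  rintro g (rfl | rfl | rfl | rfl | rfl | rfl) <;> simp [mem_latticePoints_sigma3_iff]

theorem exists_sigma3Basis_sub_mem {u : Fin 3 → ℤ} (hu : u ∈ latticePoints (coneOf sigma3Gens))
    (hu0 : u ≠ 0) : ∃ g ∈ sigma3Basis, u - g ∈ latticePoints (coneOf sigma3Gens) ∧
      ((u - g) 0 + (u - g) 1 + (u - g) 2).toNat < (u 0 + u 1 + u 2).toNat := by
  rw [mem_latticePoints_sigma3_iff] at hu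
  have hu0 : u 0 ≠ 0 ∨ u 1 ≠ 0 ∨ u 2 ≠ 0 := by
    contrapose! hu0
    simpa [funext_iff, Fin.forall_fin_succ] using hu0
  simp only [mem_latticePoints_sigma3_iff, Pi.sub_apply]
  obtain h | h | h | h | h | h | h | h : 6 ≤ u 0 ∨ u 0 = 5 ∨ u 0 = 4 ∨ u 0 = 3 ∨ u 0 = 2 ∨
      u 0 = 1 ∨ (u 0 = 0 ∧ 0 < u 1) ∨ (u 0 = 0 ∧ 0 < u 2) := by omega
  · exact ⟨![6, 8, 9], by simp [sigma3Basis], by simp; omega⟩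
  · exact ⟨![2, 3, 3], by simp [sigma3Basis], by simp; omega⟩
  · exact ⟨![2, 3, 3], by simp [sigma3Basis], by simp; omega⟩
  · exact ⟨![3, 4, 5], by simp [sigma3Basis], by simp; omega⟩
  · exact ⟨![2, 3, 3], by simp [sigma3Basis], by simp; omega⟩
  · exact ⟨![1, 2, 2], by simp [sigma3Basis], by simp; omega⟩
  · exact ⟨![0, 1, 0], by simp [sigma3Basis], by simp; omega⟩
  · exact ⟨![0, 0, 1], by simp [sigma3Basis], by simp; omega⟩

theorem closure_sigma3Basis :
    (AddSubmonoid.closure sigma3Basis : Set (Fin 3 → ℤ)) = latticePoints (coneOf sigma3Gens) :=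
  subset_antisymm ((AddSubmonoid.closure_le (S := coneSubmonoid sigma3Gens)).2 sigma3Basis_subset)
    fun _ => AddSubmonoid.mem_closure_of_descent (fun u => (u 0 + u 1 + u 2).toNat)
      fun _ => exists_sigma3Basis_sub_mem

theorem isIrreducibleElt_of_mem_sigma3Basis {g : Fin 3 → ℤ} (hg : g ∈ sigma3Basis) :
    IsIrreducibleElt (latticePoints (coneOf sigma3Gens)) g := by
  refine ⟨sigma3Basis_subset hg, ?_, fun a b ha hb hab => ?_⟩
  · rintro rfl
    exact zero_notMem_sigma3Basis hg
  rw [mem_latticePoints_sigma3_iff] at ha hb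
  rcases hg with rfl | rfl | rfl | rfl | rfl | rfl <;>
    simp [funext_iff, Fin.forall_fin_succ] at hab ⊢ <;> omega

/-- the Hilbert basis of the cone `σ₃ = ⟨(0,1,0),(0,0,1),(6,8,9)⟩` of the
dual Newton polyhedron of `y³ + xz² − x⁴ = 0` is exactly
`{(0,1,0),(0,0,1),(6,8,9),(1,2,2),(2,3,3),(3,4,5)}`, and these six vectors generate the
monoid `S_{σ₃} = σ₃ ∩ ℤ³`. -/
theorem elliptic_sigma3_hilbert_basis :
    let S := latticePoints (coneOf ![![0, 1, 0], ![0, 0, 1], ![6, 8, 9]])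
    let B : Set (Fin 3 → ℤ) :=
      {![0, 1, 0], ![0, 0, 1], ![6, 8, 9], ![1, 2, 2], ![2, 3, 3], ![3, 4, 5]}
    hilbertBasis S = B ∧ (AddSubmonoid.closure B : Set (Fin 3 → ℤ)) = S :=
  ⟨subset_antisymm
      (fun _ hu => mem_of_isIrreducibleElt_of_closure_eq closure_sigma3Basis
        zero_notMem_sigma3Basis hu)
      fun _ => isIrreducibleElt_of_mem_sigma3Basis,
    closure_sigma3Basis⟩
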